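/- Let S be a nonempty semigroup such that S \ E(S) is finite, and let T be an S-valued sequence of length |S \ E(S)| with Π(T) ∩ E(S) = ∅. Then the subsemigroup ⟨supp(T)⟩ of S generated by supp(T) equals the union of the cyclic subsemigroups ⟨a⟩ over all a ∈ supp(T). In particular, every x ∈ Π(T) can be written as x = a^k for some a ∈ supp(T) and some integer k with 1 ≤ k ≤ v_a(T). -/

import Mathlib

/-- Product, in order, of the nonempty list `a :: l` in a semigroup. -/
def sprod {S : Type*} [Mul S] (a : S) (l : List S) : S := l.foldl (· * ·) a

/-- `pow1 x n = x^(n+1)`: the `(n+1)`-st power of `x` in a semigroup. -/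
def pow1 {S : Type*} [Mul S] (x : S) : ℕ → S := fun n => Nat.rec x (fun _ y => y * x) n

/-- `Π(T)`: the set of products, in order, of nonempty lists which are
permutations of order-preserving sublists of `T`. -/
def PiSet {S : Type*} [Mul S] (T : List S) : Set S :=
  {s | ∃ u : List S, u.Sublist T ∧ ∃ a l, (a :: l).Perm u ∧ sprod a l = s}

/-- `A(L)`: the set of products, in order, of nonempty order-preserving sublists of `L`. -/
def ASet {S : Type*} [Mul S] (L : List S) : Set S :=
  {s | ∃ a l, (a :: l).Sublist L ∧ sprod a l = s}

/-- `HasIndexPeriod x r p` says that `r` is the index of `x` (the least `r > 0` such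
that `x^r = x^t` for some positive `t ≠ r`) and `p` is the period of `x` (the least
`p > 0` with `x^(r+p) = x^r`). Powers are expressed via `pow1 x (n-1) = x^n`. -/
def HasIndexPeriod {S : Type*} [Mul S] (x : S) (r p : ℕ) : Prop :=
  (0 < r ∧ (∃ t, 0 < t ∧ t ≠ r ∧ pow1 x (t - 1) = pow1 x (r - 1)) ∧
    ∀ r', 0 < r' → (∃ t, 0 < t ∧ t ≠ r' ∧ pow1 x (t - 1) = pow1 x (r' - 1)) → r ≤ r') ∧
  (0 < p ∧ pow1 x (r + p - 1) = pow1 x (r - 1) ∧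
    ∀ p', 0 < p' → pow1 x (r + p' - 1) = pow1 x (r - 1) → p ≤ p')

/-!
Call a multiset `M` tight if its products avoid the idempotents and `|Π(M)| = |M|`. Deleting
an element `c` from an idempotent-product free `M` always shrinks `Π(M)`: otherwise every
power of `c` would lie in the finite set `Π(M)`, which would then contain an idempotent. Hence
`|M| ≤ |Π(M)| ≤ |S \ E(S)|`, and `T` is tight. In a tight multiset, deleting `c` removes exactly
one product, and induction on `|M|` shows that it is `c^(v_c)`; so `Π(M)` consists of the powers
`c^k` with `k ≤ v_c`. Consequently `c * y` is either in `Π(M)` or equal to `c^(v_c + 1)` for every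
`y ∈ Π(M)`, which makes the union of the cyclic subsemigroups closed under multiplication.
-/

section Words
variable {S : Type*} [Semigroup S]

lemma sprod_append (a b : S) (l l' : List S) :
    sprod a (l ++ b :: l') = sprod a l * sprod b l' := by
  simp only [sprod, List.foldl_append, List.foldl_cons]
  exact List.foldl_assoc

lemma sprod_concat (a c : S) (l : List S) : sprod a (l ++ [c]) = sprod a l * c :=
  sprod_append a c l []

lemma pow1_succ (x : S) (n : ℕ) : pow1 x (n + 1) = pow1 x n * x := rfl

lemma pow1_add (x : S) (i j : ℕ) : pow1 x i * pow1 x j = pow1 x (i + j + 1) := by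
  induction j with
  | zero => rfl
  | succ j ih => rw [pow1_succ, ← mul_assoc, ih, ← pow1_succ]; rfl

lemma mul_pow1 (x : S) (n : ℕ) : x * pow1 x n = pow1 x (n + 1) := by
  have h := pow1_add x 0 n
  rwa [zero_add] at h

lemma sprod_replicate (c : S) (n : ℕ) : sprod c (List.replicate n c) = pow1 c n := by
  induction n with
  | zero => rfl
  | succ n ih => rw [List.replicate_succ', sprod_concat, ih, pow1_succ]

lemma Subsemigroup.pow1_mem {s : Subsemigroup S} {x : S} (hx : x ∈ s) (n : ℕ) : pow1 x n ∈ s := by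
  induction n with
  | zero => exact hx
  | succ n ih => exact mul_mem ih hx

lemma exists_idempotent_of_finite_of_mul_mem {s : Set S} (hne : s.Nonempty) (hs : s.Finite)
    (hmul : ∀ x ∈ s, ∀ y ∈ s, x * y ∈ s) : ∃ e ∈ s, e * e = e := by
  let : TopologicalSpace S := ⊥
  have : DiscreteTopology S := ⟨rfl⟩
  exact exists_idempotent_in_compact_subsemigroup (fun _ => continuous_of_discreteTopology) s hne
    hs.isCompact hmul

lemma exists_pow1_mem_pow1_succ_not_mem {P : Set S} (hPfin : P.Finite)
    (hP : P ⊆ {x | x * x ≠ x}) {c : S} (hc : c ∈ P) :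
    ∃ m, pow1 c m ∈ P ∧ pow1 c (m + 1) ∉ P := by
  by_contra! hclosed
  have hpow : Set.range (pow1 c) ⊆ P := by
    rintro _ ⟨n, rfl⟩
    induction n with
    | zero => exact hc
    | succ n ih => exact hclosed n ih
  obtain ⟨_, ⟨n, rfl⟩, hidem⟩ := exists_idempotent_of_finite_of_mul_mem (Set.range_nonempty _)
    (hPfin.subset hpow) (by rintro _ ⟨i, rfl⟩ _ ⟨j, rfl⟩; exact ⟨_, (pow1_add c i j).symm⟩)
  exact hP (hpow ⟨n, rfl⟩) hidem

end Words

namespace Multiset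
variable {S : Type*} [Semigroup S]

/-- `Π` of a sequence only depends on the sequence up to order, i.e. on a multiset
(`piSet_eq_prodSet`). -/
def prodSet (M : Multiset S) : Set S := {s | ∃ a l, ↑(a :: l) ≤ M ∧ sprod a l = s}

lemma prodSet_mono {M M' : Multiset S} (h : M ≤ M') : M.prodSet ⊆ M'.prodSet :=
  fun _ ⟨a, l, hle, hp⟩ => ⟨a, l, hle.trans h, hp⟩

lemma exists_mem_of_mem_prodSet {M : Multiset S} {y : S} (hy : y ∈ M.prodSet) : ∃ c, c ∈ M := by
  obtain ⟨a, l, hle, -⟩ := hy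
  exact ⟨a, mem_of_le hle (by simp)⟩

lemma mem_prodSet_of_mem {M : Multiset S} {c : S} (h : c ∈ M) : c ∈ M.prodSet :=
  ⟨c, [], by simpa using h, rfl⟩

lemma mul_mem_prodSet_add {A B : Multiset S} {x y : S} (hx : x ∈ A.prodSet)
    (hy : y ∈ B.prodSet) : x * y ∈ (A + B).prodSet := by
  obtain ⟨a, l, hA, rfl⟩ := hx
  obtain ⟨b, l', hB, rfl⟩ := hy
  refine ⟨a, l ++ b :: l', ?_, sprod_append a b l l'⟩
  rw [← List.cons_append, ← coe_add]
  exact add_le_add hA hB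

variable [DecidableEq S]

lemma mul_mem_prodSet_of_mem_erase {M : Multiset S} {c x : S} (hc : c ∈ M)
    (hx : x ∈ (M.erase c).prodSet) : x * c ∈ M.prodSet := by
  have h := mul_mem_prodSet_add hx (mem_prodSet_of_mem (mem_singleton_self c))
  rwa [add_comm, singleton_add, cons_erase hc] at h

lemma mul_mem_prodSet_of_mem_erase' {M : Multiset S} {c x : S} (hc : c ∈ M)
    (hx : x ∈ (M.erase c).prodSet) : c * x ∈ M.prodSet := by
  have h := mul_mem_prodSet_add (mem_prodSet_of_mem (mem_singleton_self c)) hx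
  rwa [singleton_add, cons_erase hc] at h

lemma pow1_mem_prodSet {M : Multiset S} {c : S} {n : ℕ} (h : n + 1 ≤ M.count c) :
    pow1 c n ∈ M.prodSet := by
  refine ⟨c, List.replicate n c, ?_, sprod_replicate c n⟩
  rw [← List.replicate_succ, coe_replicate]
  exact le_count_iff_replicate_le.mp h

lemma prodSet_erase_ssubset (hfin : {x : S | x * x ≠ x}.Finite) {M : Multiset S}
    (hM : M.prodSet ⊆ {x | x * x ≠ x}) {c : S} (hc : c ∈ M) :
    (M.erase c).prodSet ⊂ M.prodSet := by
  refine (prodSet_mono (erase_le c M)).ssubset_of_ne fun heq => ?_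
  obtain ⟨m, hm, hm'⟩ :=
    exists_pow1_mem_pow1_succ_not_mem (hfin.subset hM) hM (mem_prodSet_of_mem hc)
  exact hm' (mul_mem_prodSet_of_mem_erase hc (heq ▸ hm))

lemma card_le_ncard_prodSet (hfin : {x : S | x * x ≠ x}.Finite) (M : Multiset S)
    (hM : M.prodSet ⊆ {x | x * x ≠ x}) : card M ≤ M.prodSet.ncard := by
  induction M using strongInductionOn with
  | ih M IH =>
    rcases empty_or_exists_mem M with rfl | ⟨c, hc⟩
    · simp
    · have h1 := IH _ (erase_lt.mpr hc) ((prodSet_mono (erase_le c M)).trans hM)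
      have h2 := Set.ncard_lt_ncard (prodSet_erase_ssubset hfin hM hc) (hfin.subset hM)
      have h3 := card_erase_add_one hc
      omega

/-- The minimal size of `Π(M)` allowed by `card_le_ncard_prodSet`. -/
def IsTight (M : Multiset S) : Prop :=
  M.prodSet ⊆ {x | x * x ≠ x} ∧ M.prodSet.ncard = card M

lemma IsTight.erase (hfin : {x : S | x * x ≠ x}.Finite) {M : Multiset S} (hT : M.IsTight)
    {c : S} (hc : c ∈ M) : (M.erase c).IsTight := by
  have hsub := (prodSet_mono (erase_le c M)).trans hT.1
  refine ⟨hsub, le_antisymm ?_ (card_le_ncard_prodSet hfin _ hsub)⟩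
  have h1 := Set.ncard_lt_ncard (prodSet_erase_ssubset hfin hT.1 hc) (hfin.subset hT.1)
  have h2 := card_erase_add_one hc
  have h3 := hT.2
  omega

lemma IsTight.eq_of_notMem_prodSet_erase (hfin : {x : S | x * x ≠ x}.Finite) {M : Multiset S}
    (hT : M.IsTight) {c y z : S} (hc : c ∈ M) (hy : y ∈ M.prodSet)
    (hy' : y ∉ (M.erase c).prodSet) (hz : z ∈ M.prodSet) (hz' : z ∉ (M.erase c).prodSet) :
    y = z := by
  have hdiff : (M.prodSet \ (M.erase c).prodSet).ncard ≤ 1 := by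
    have h1 := Set.ncard_sdiff_add_ncard_of_subset (prodSet_mono (erase_le c M))
      (hfin.subset hT.1)
    have h2 := (hT.erase hfin hc).2
    have h3 := card_erase_add_one hc
    have h4 := hT.2
    omega
  exact (Set.ncard_le_one ((hfin.subset hT.1).sdiff)).mp hdiff y ⟨hy, hy'⟩ z ⟨hz, hz'⟩

def powChains (M : Multiset S) : Set S :=
  {y | ∃ c ∈ M, ∃ k, k + 1 ≤ M.count c ∧ pow1 c k = y}

lemma powChains_subset_prodSet (M : Multiset S) : M.powChains ⊆ M.prodSet := by
  rintro _ ⟨c, -, k, hk, rfl⟩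
  exact pow1_mem_prodSet hk

lemma powChains_erase_subset (M : Multiset S) (c : S) : (M.erase c).powChains ⊆ M.powChains := by
  rintro _ ⟨f, hf, k, hk, rfl⟩
  exact ⟨f, mem_of_mem_erase hf, k, hk.trans (count_le_of_le f (erase_le c M)), rfl⟩

/-- If `c^v ∈ Π(M - c)` (`v = v_c(M)`), let `c^(m+2)` be where the powers of `c` leave
`Π(M - c)`. Both `c^(m+1)` and `c^(v-1)` lie in `Π(M - c) \ Π(M - c - c)`, a singleton, so
`c^(m+2) = c^v ∈ Π(M - c)`. -/
lemma IsTight.pow1_count_notMem_prodSet_erase_of_two_le (hfin : {x : S | x * x ≠ x}.Finite)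
    {M : Multiset S} (hT : M.IsTight) {c : S} (hc2 : 2 ≤ M.count c)
    (hprev : pow1 c (M.count c - 2) ∉ ((M.erase c).erase c).prodSet) :
    pow1 c (M.count c - 1) ∉ (M.erase c).prodSet := by
  intro hmem
  have hc : c ∈ M := count_pos.mp (by omega)
  have hce : c ∈ M.erase c := count_pos.mp (by rw [count_erase_self]; omega)
  have hTe := hT.erase hfin hc
  obtain ⟨m, hm, hm'⟩ :=
    exists_pow1_mem_pow1_succ_not_mem (hfin.subset hTe.1) hTe.1 (mem_prodSet_of_mem hce)
  have hm_new : pow1 c m ∉ ((M.erase c).erase c).prodSet :=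
    fun h => hm' (mul_mem_prodSet_of_mem_erase hce h)
  have hprev_mem : pow1 c (M.count c - 2) ∈ (M.erase c).prodSet :=
    pow1_mem_prodSet (by rw [count_erase_self]; omega)
  have heq := hTe.eq_of_notMem_prodSet_erase hfin hce hm hm_new hprev_mem hprev
  apply hm'
  rwa [pow1_succ, heq, ← pow1_succ, show M.count c - 2 + 1 = M.count c - 1 by omega]

/-- If `c ∈ Π(M - c)`, then `c = f^(κ+1)` with `f ≠ c` and `κ ≥ 1`, and `f^(v_f) = f^(v_f-κ-1) * c`
lies in `Π(M - f)`, contradicting `htop`. -/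
lemma notMem_prodSet_erase_of_count_eq_one {M : Multiset S} {c : S} (hc1 : M.count c = 1)
    (hchains : (M.erase c).prodSet = (M.erase c).powChains)
    (htop : ∀ f ∈ M, 2 ≤ M.count f → pow1 f (M.count f - 1) ∉ (M.erase f).prodSet) :
    c ∉ (M.erase c).prodSet := by
  rw [hchains]
  rintro ⟨f, hf, κ, hκ, hfc⟩
  have hfc' : f ≠ c := by
    rintro rfl
    rw [count_erase_self, hc1] at hκ
    omega
  rw [count_erase_of_ne hfc'] at hκ
  have hκ0 : κ ≠ 0 := by
    rintro rfl
    exact hfc' hfc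
  have hcf : c ∈ M.erase f := (mem_erase_of_ne (Ne.symm hfc')).mpr (count_pos.mp (by omega))
  apply htop f (mem_of_mem_erase hf) (by omega)
  rcases (show κ + 1 = M.count f ∨ κ + 2 ≤ M.count f by omega) with h | h
  · rw [← h, Nat.add_sub_cancel, hfc]
    exact mem_prodSet_of_mem hcf
  · have hsplit : pow1 f (M.count f - 1) = pow1 f (M.count f - 2 - κ) * c := by
      rw [← hfc, pow1_add]
      congr 1
      omega
    rw [hsplit]
    refine mul_mem_prodSet_of_mem_erase hcf (pow1_mem_prodSet ?_)
    rw [count_erase_of_ne hfc', count_erase_self]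
    omega

lemma IsTight.prodSet_eq_powChains_of_forall (hfin : {x : S | x * x ≠ x}.Finite)
    {M : Multiset S} (hT : M.IsTight)
    (htop : ∀ c ∈ M, pow1 c (M.count c - 1) ∉ (M.erase c).prodSet)
    (herase : ∀ c ∈ M, (M.erase c).prodSet = (M.erase c).powChains) :
    M.prodSet = M.powChains := by
  refine subset_antisymm (fun y hy => ?_) (powChains_subset_prodSet M)
  obtain ⟨c, hc⟩ := exists_mem_of_mem_prodSet hy
  by_cases hy' : y ∈ (M.erase c).prodSet
  · exact powChains_erase_subset M c (herase c hc ▸ hy')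
  · have hc1 : M.count c - 1 + 1 ≤ M.count c := by have := count_pos.mpr hc; omega
    exact ⟨c, hc, _, hc1,
      (hT.eq_of_notMem_prodSet_erase hfin hc hy hy' (pow1_mem_prodSet hc1) (htop c hc)).symm⟩

theorem IsTight.pow1_count_notMem_prodSet_erase_and_prodSet_eq
    (hfin : {x : S | x * x ≠ x}.Finite) (M : Multiset S) (hT : M.IsTight) :
    (∀ c ∈ M, pow1 c (M.count c - 1) ∉ (M.erase c).prodSet) ∧ M.prodSet = M.powChains := by
  induction M using strongInductionOn with
  | ih M IH =>
    have IHe := fun c (hc : c ∈ M) => IH _ (erase_lt.mpr hc) (hT.erase hfin hc)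
    have htop2 : ∀ f ∈ M, 2 ≤ M.count f → pow1 f (M.count f - 1) ∉ (M.erase f).prodSet := by
      intro f hf h2
      refine hT.pow1_count_notMem_prodSet_erase_of_two_le hfin h2 ?_
      have := (IHe f hf).1 f (count_pos.mp (by rw [count_erase_self]; omega))
      rwa [count_erase_self, show M.count f - 1 - 1 = M.count f - 2 by omega] at this
    have htop : ∀ c ∈ M, pow1 c (M.count c - 1) ∉ (M.erase c).prodSet := by
      intro c hc
      rcases (show M.count c = 1 ∨ 2 ≤ M.count c by have := count_pos.mpr hc; omega) with h1 | h2
      · rw [h1]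
        exact notMem_prodSet_erase_of_count_eq_one h1 (IHe c hc).2 htop2
      · exact htop2 c hc h2
    exact ⟨htop, hT.prodSet_eq_powChains_of_forall hfin htop fun c hc => (IHe c hc).2⟩

lemma IsTight.pow1_count_notMem_prodSet_erase (hfin : {x : S | x * x ≠ x}.Finite)
    {M : Multiset S} (hT : M.IsTight) {c : S} (hc : c ∈ M) :
    pow1 c (M.count c - 1) ∉ (M.erase c).prodSet :=
  (hT.pow1_count_notMem_prodSet_erase_and_prodSet_eq hfin M).1 c hc

lemma IsTight.prodSet_eq_powChains (hfin : {x : S | x * x ≠ x}.Finite) {M : Multiset S}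
    (hT : M.IsTight) : M.prodSet = M.powChains :=
  (hT.pow1_count_notMem_prodSet_erase_and_prodSet_eq hfin M).2

lemma IsTight.mul_mem_prodSet_or (hfin : {x : S | x * x ≠ x}.Finite) {M : Multiset S}
    (hT : M.IsTight) {c y : S} (hc : c ∈ M) (hy : y ∈ M.prodSet) :
    c * y ∈ M.prodSet ∨ c * y = pow1 c (M.count c) := by
  by_cases hy' : y ∈ (M.erase c).prodSet
  · exact Or.inl (mul_mem_prodSet_of_mem_erase' hc hy')
  · have hc1 : M.count c - 1 + 1 ≤ M.count c := by have := count_pos.mpr hc; omega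
    right
    rw [hT.eq_of_notMem_prodSet_erase hfin hc hy hy' (pow1_mem_prodSet hc1)
      (hT.pow1_count_notMem_prodSet_erase hfin hc), mul_pow1]
    congr 1
    omega

lemma IsTight.pow1_mul_mem_prodSet_or (hfin : {x : S | x * x ≠ x}.Finite) {M : Multiset S}
    (hT : M.IsTight) {a b : S} (ha : a ∈ M) (hb : b ∈ M) (i : ℕ) :
    pow1 a i * b ∈ M.prodSet ∨ ∃ k, pow1 a i * b = pow1 a k := by
  induction i with
  | zero => exact (hT.mul_mem_prodSet_or hfin ha (mem_prodSet_of_mem hb)).imp_right (⟨_, ·⟩)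
  | succ i ih =>
    rw [← mul_pow1, mul_assoc]
    rcases ih with hmem | ⟨k, hk⟩
    · exact (hT.mul_mem_prodSet_or hfin ha hmem).imp_right (⟨_, ·⟩)
    · exact Or.inr ⟨k + 1, by rw [hk, mul_pow1]⟩

lemma IsTight.exists_pow1_mul_eq_pow1 (hfin : {x : S | x * x ≠ x}.Finite) {M : Multiset S}
    (hT : M.IsTight) {a b : S} (ha : a ∈ M) (hb : b ∈ M) (i : ℕ) :
    ∃ c ∈ M, ∃ k, pow1 a i * b = pow1 c k := by
  rcases hT.pow1_mul_mem_prodSet_or hfin ha hb i with hmem | ⟨k, hk⟩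
  · rw [hT.prodSet_eq_powChains hfin] at hmem
    obtain ⟨c, hc, k, -, hk⟩ := hmem
    exact ⟨c, hc, k, hk.symm⟩
  · exact ⟨a, ha, k, hk⟩

lemma IsTight.exists_pow1_mul_pow1_eq_pow1 (hfin : {x : S | x * x ≠ x}.Finite)
    {M : Multiset S} (hT : M.IsTight) {a b : S} (ha : a ∈ M) (hb : b ∈ M) (i j : ℕ) :
    ∃ c ∈ M, ∃ k, pow1 a i * pow1 b j = pow1 c k := by
  induction j with
  | zero => exact hT.exists_pow1_mul_eq_pow1 hfin ha hb i
  | succ j ih =>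
    obtain ⟨c, hc, k, hk⟩ := ih
    rw [pow1_succ, ← mul_assoc, hk]
    exact hT.exists_pow1_mul_eq_pow1 hfin hc hb k

lemma IsTight.closure_eq (hfin : {x : S | x * x ≠ x}.Finite) {M : Multiset S}
    (hT : M.IsTight) :
    (Subsemigroup.closure {x | x ∈ M} : Set S) = ⋃ a ∈ {x | x ∈ M}, Set.range (pow1 a) := by
  let K : Subsemigroup S :=
    { carrier := ⋃ a ∈ {x | x ∈ M}, Set.range (pow1 a)
      mul_mem' := by
        simp only [Set.mem_iUnion, Set.mem_range]
        rintro _ _ ⟨a, ha, i, rfl⟩ ⟨b, hb, j, rfl⟩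
        obtain ⟨c, hc, k, hk⟩ := hT.exists_pow1_mul_pow1_eq_pow1 hfin ha hb i j
        exact ⟨c, hc, k, hk.symm⟩ }
  refine subset_antisymm (Subsemigroup.closure_le (S := K).mpr ?_) ?_
  · exact fun a ha => Set.mem_biUnion ha ⟨0, rfl⟩
  · exact Set.iUnion₂_subset fun a ha => Set.range_subset_iff.mpr
      (Subsemigroup.pow1_mem (Subsemigroup.subset_closure ha))

end Multiset

lemma piSet_eq_prodSet {S : Type*} [Semigroup S] (T : List S) :
    PiSet T = (T : Multiset S).prodSet := by
  ext s
  constructor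
  · rintro ⟨u, hsub, a, l, hperm, hprod⟩
    exact ⟨a, l, (Multiset.coe_eq_coe.mpr hperm).trans_le (Multiset.coe_le.mpr hsub.subperm),
      hprod⟩
  · rintro ⟨a, l, hle, hprod⟩
    obtain ⟨u, hperm, hsub⟩ := Multiset.coe_le.mp hle
    exact ⟨u, hsub, a, l, hperm.symm, hprod⟩

lemma isTight_coe {S : Type*} [Semigroup S] [DecidableEq S] (hfin : {x : S | x * x ≠ x}.Finite)
    {T : List S} (hlen : T.length = {x : S | x * x ≠ x}.ncard)
    (hfree : PiSet T ∩ {e : S | e * e = e} = ∅) : (T : Multiset S).IsTight := by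
  have hsub : (T : Multiset S).prodSet ⊆ {x | x * x ≠ x} := fun x hx hxx =>
    (Set.eq_empty_iff_forall_notMem.mp hfree) x ⟨(piSet_eq_prodSet T).symm ▸ hx, hxx⟩
  refine ⟨hsub, le_antisymm ?_ (Multiset.card_le_ncard_prodSet hfin _ hsub)⟩
  rw [Multiset.coe_card, hlen]
  exact Set.ncard_le_ncard hsub hfin

theorem stmt_8_general {S : Type*} [Semigroup S] [DecidableEq S]
    (hfin : {x : S | x * x ≠ x}.Finite)
    (T : List S) (hlen : T.length = {x : S | x * x ≠ x}.ncard)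
    (hfree : PiSet T ∩ {e : S | e * e = e} = ∅) :
    ((Subsemigroup.closure {x : S | x ∈ T} : Set S)
        = ⋃ a ∈ {x : S | x ∈ T}, Set.range (pow1 a)) ∧
      (∀ x ∈ PiSet T, ∃ a ∈ T, ∃ k : ℕ, k + 1 ≤ T.count a ∧ pow1 a k = x) := by
  have hT := isTight_coe hfin hlen hfree
  refine ⟨by simpa using hT.closure_eq hfin, fun x hx => ?_⟩
  rw [piSet_eq_prodSet, hT.prodSet_eq_powChains hfin] at hx
  obtain ⟨a, ha, k, hk, rfl⟩ := hx
  exact ⟨a, Multiset.mem_coe.mp ha, k, by rwa [Multiset.coe_count] at hk, rfl⟩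

/-- Claim B: for an idempotent-product free sequence `T` of maximal length
`|S \ E(S)|`, the subsemigroup generated by `supp(T)` is `⋃_{a ∈ supp(T)} ⟨a⟩`;
in particular every `x ∈ Π(T)` equals `a^k` for some `a ∈ supp(T)` and
`1 ≤ k ≤ v_a(T)` (here `pow1 a (k-1) = a^k`, so `pow1 a k = a^(k+1)`). -/
theorem stmt_8 {S : Type*} [Semigroup S] [Nonempty S] [DecidableEq S]
    (hfin : {x : S | x * x ≠ x}.Finite)
    (T : List S) (hlen : T.length = {x : S | x * x ≠ x}.ncard)
    (hfree : PiSet T ∩ {e : S | e * e = e} = ∅) :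
    ((Subsemigroup.closure {x : S | x ∈ T} : Set S)
        = ⋃ a ∈ {x : S | x ∈ T}, Set.range (pow1 a)) ∧
      (∀ x ∈ PiSet T, ∃ a ∈ T, ∃ k : ℕ, k + 1 ≤ T.count a ∧ pow1 a k = x) :=
  stmt_8_general hfin T hlen hfree
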